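/- For a metric of the form g = e^{2X(ψ)}(e^{-2W(ψ)} dψ² + e^{2W(ψ)} sin²ψ (dθ² + sin²θ dφ²)) on S³, the Ricci eigenvalue in the S² directions is R_{S^2} = -e^{2(W-X)}[ -2 + (1 - e^{-4W})/sin²ψ + X'' + W'' + (3X' + 5W')cotψ + (X'+W')(X'+3W') ]. -/

import Mathlib

open Real
open scoped ContDiff

/-- Partial derivative ∂_i of a function on coordinate space ℝ³ = (ψ,θ,φ). -/
noncomputable def pd (i : Fin 3) (f : (Fin 3 → ℝ) → ℝ) (x : Fin 3 → ℝ) : ℝ :=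
  deriv (fun t => f (Function.update x i t)) (x i)

/-- Components of the metric g = e^{2X}(e^{-2W}dψ² + e^{2W}sin²ψ(dθ² + sin²θ dφ²))
on S³ in the coordinates (ψ,θ,φ) = (x 0, x 1, x 2). -/
noncomputable def gmat (X W : ℝ → ℝ) (x : Fin 3 → ℝ) : Matrix (Fin 3) (Fin 3) ℝ :=
  Matrix.diagonal (fun i =>
    if i = 0 then Real.exp (2 * X (x 0) - 2 * W (x 0))
    else if i = 1 then Real.exp (2 * X (x 0) + 2 * W (x 0)) * Real.sin (x 0) ^ 2
    else Real.exp (2 * X (x 0) + 2 * W (x 0)) * Real.sin (x 0) ^ 2 * Real.sin (x 1) ^ 2)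

/-- Christoffel symbols Γ^a_{bc} = (1/2) g^{ad}(∂_b g_{dc} + ∂_c g_{db} - ∂_d g_{bc}). -/
noncomputable def Christoffel (g : (Fin 3 → ℝ) → Matrix (Fin 3) (Fin 3) ℝ)
    (a b c : Fin 3) (x : Fin 3 → ℝ) : ℝ :=
  (1 / 2) * ∑ d, (g x)⁻¹ a d *
    (pd b (fun y => g y d c) x + pd c (fun y => g y d b) x - pd d (fun y => g y b c) x)

/-- Ricci tensor R_{ab} = ∂_c Γ^c_{ab} - ∂_a Γ^c_{cb} + Γ^c_{cd}Γ^d_{ab} - Γ^c_{ad}Γ^d_{cb}. -/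
noncomputable def RicciT (g : (Fin 3 → ℝ) → Matrix (Fin 3) (Fin 3) ℝ)
    (a b : Fin 3) (x : Fin 3 → ℝ) : ℝ :=
  (∑ c, pd c (Christoffel g c a b) x) - pd a (fun y => ∑ c, Christoffel g c c b y) x
    + ∑ c, ∑ d, (Christoffel g c c d x * Christoffel g d a b x
      - Christoffel g c a d x * Christoffel g d c b x)

lemma gmat_inv (X W : ℝ → ℝ) (y : Fin 3 → ℝ) (h0 : Real.sin (y 0) ≠ 0)
    (h1 : Real.sin (y 1) ≠ 0) :
    (gmat X W y)⁻¹ = Matrix.diagonal (fun i =>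
      if i = 0 then (Real.exp (2 * X (y 0) - 2 * W (y 0)))⁻¹
      else if i = 1 then (Real.exp (2 * X (y 0) + 2 * W (y 0)) * Real.sin (y 0) ^ 2)⁻¹
      else (Real.exp (2 * X (y 0) + 2 * W (y 0)) * Real.sin (y 0) ^ 2 * Real.sin (y 1) ^ 2)⁻¹) := by
  apply Matrix.inv_eq_right_inv
  ext i j
  fin_cases i <;> fin_cases j <;>
    simp [gmat, Matrix.mul_apply, Fin.sum_univ_three, Matrix.diagonal, Matrix.one_apply] <;>
    field_simp <;> ring

noncomputable def Af (X W : ℝ → ℝ) (s : ℝ) : ℝ := Real.exp (2 * X s - 2 * W s)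
noncomputable def Bf (X W : ℝ → ℝ) (s : ℝ) : ℝ := Real.exp (2 * X s + 2 * W s) * Real.sin s ^ 2

/-- Explicit Christoffel symbols of `gmat`. -/
noncomputable def Γf (X W : ℝ → ℝ) (a b c : Fin 3) (y : Fin 3 → ℝ) : ℝ :=
  if a = 0 then
    if b = 0 ∧ c = 0 then (1/2) * (Af X W (y 0))⁻¹ * deriv (Af X W) (y 0)
    else if b = 1 ∧ c = 1 then -((1/2) * (Af X W (y 0))⁻¹ * deriv (Bf X W) (y 0))
    else if b = 2 ∧ c = 2 then
      -((1/2) * (Af X W (y 0))⁻¹ * deriv (Bf X W) (y 0) * Real.sin (y 1) ^ 2)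
    else 0
  else if a = 1 then
    if (b = 0 ∧ c = 1) ∨ (b = 1 ∧ c = 0) then (1/2) * (Bf X W (y 0))⁻¹ * deriv (Bf X W) (y 0)
    else if b = 2 ∧ c = 2 then -(Real.sin (y 1) * Real.cos (y 1))
    else 0
  else
    if (b = 0 ∧ c = 2) ∨ (b = 2 ∧ c = 0) then (1/2) * (Bf X W (y 0))⁻¹ * deriv (Bf X W) (y 0)
    else if (b = 1 ∧ c = 2) ∨ (b = 2 ∧ c = 1) then Real.cos (y 1) / Real.sin (y 1)
    else 0

lemma deriv_sin_sq (t : ℝ) :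
    deriv (fun u => Real.sin u ^ 2) t = 2 * Real.sin t * Real.cos t := by
  have h := ((Real.hasDerivAt_sin t).pow 2).deriv
  simpa [mul_comm, mul_assoc, mul_left_comm] using h

lemma deriv_const_mul_sin_sq (c t : ℝ) :
    deriv (fun u => c * Real.sin u ^ 2) t = c * (2 * Real.sin t * Real.cos t) := by
  rw [deriv_const_mul _ (by fun_prop : DifferentiableAt ℝ (fun u => Real.sin u ^ 2) t), deriv_sin_sq]

lemma Af_fold (X W : ℝ → ℝ) (s : ℝ) : Real.exp (2 * X s - 2 * W s) = Af X W s := rfl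
lemma Bf_fold (X W : ℝ → ℝ) (s : ℝ) :
    Real.exp (2 * X s + 2 * W s) * Real.sin s ^ 2 = Bf X W s := rfl
lemma Af_ne (X W : ℝ → ℝ) (s : ℝ) : Af X W s ≠ 0 := Real.exp_ne_zero _
lemma Bf_ne (X W : ℝ → ℝ) (s : ℝ) (hs : Real.sin s ≠ 0) : Bf X W s ≠ 0 :=
  mul_ne_zero (Real.exp_ne_zero _) (pow_ne_zero _ hs)

set_option maxHeartbeats 1000000 in
lemma christoffel_eq (X W : ℝ → ℝ) (y : Fin 3 → ℝ) (h0 : Real.sin (y 0) ≠ 0)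
    (h1 : Real.sin (y 1) ≠ 0) (a b c : Fin 3) :
    Christoffel (gmat X W) a b c y = Γf X W a b c y := by
  have hinv := gmat_inv X W y h0 h1
  have hA := Af_ne X W (y 0)
  have hB := Bf_ne X W (y 0) h0
  fin_cases a <;> fin_cases b <;> fin_cases c <;>
    simp only [Christoffel, hinv, Γf] <;>
    simp [Fin.sum_univ_three, Matrix.diagonal_apply, gmat, pd, Function.update_self,
      Function.update_of_ne, Af_fold, Bf_fold, deriv_sin_sq, deriv_const_mul_sin_sq] <;>
    field_simp <;> ring

set_option maxHeartbeats 1000000 in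
theorem stmt_12 (X W : ℝ → ℝ) (hX : ContDiff ℝ (⊤ : ℕ∞) X) (hW : ContDiff ℝ (⊤ : ℕ∞) W)
    (x : Fin 3 → ℝ) (hψ : x 0 ∈ Set.Ioo (0:ℝ) π) (hθ : x 1 ∈ Set.Ioo (0:ℝ) π) :
    RicciT (gmat X W) 1 1 x / gmat X W x 1 1 =
      -(Real.exp (2 * (W (x 0) - X (x 0)))) *
        (-2 + (1 - Real.exp (-4 * W (x 0))) / Real.sin (x 0) ^ 2
          + deriv (deriv X) (x 0) + deriv (deriv W) (x 0)
          + (3 * deriv X (x 0) + 5 * deriv W (x 0)) * (Real.cos (x 0) / Real.sin (x 0))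
          + (deriv X (x 0) + deriv W (x 0)) * (deriv X (x 0) + 3 * deriv W (x 0))) := by
  obtain ⟨hp0, hppi⟩ := hψ
  obtain ⟨ht0, htpi⟩ := hθ
  have h0 : Real.sin (x 0) ≠ 0 := ne_of_gt (Real.sin_pos_of_pos_of_lt_pi hp0 hppi)
  have h1 : Real.sin (x 1) ≠ 0 := ne_of_gt (Real.sin_pos_of_pos_of_lt_pi ht0 htpi)
  have hev0 : ∀ᶠ t in nhds (x 0), Real.sin t ≠ 0 :=
    Real.continuous_sin.continuousAt.eventually_ne h0
  have hev1 : ∀ᶠ t in nhds (x 1), Real.sin t ≠ 0 :=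
    Real.continuous_sin.continuousAt.eventually_ne h1
  have hXd := hX.differentiable (by simp)
  have hWd := hW.differentiable (by simp)
  have hX2 : Differentiable ℝ (deriv X) :=
    (contDiff_infty_iff_deriv.mp (hX.of_le (by simp))).2.differentiable (by norm_num)
  have hW2 : Differentiable ℝ (deriv W) :=
    (contDiff_infty_iff_deriv.mp (hW.of_le (by simp))).2.differentiable (by norm_num)
  -- derivative of Bf
  have hBd : ∀ s : ℝ, HasDerivAt (Bf X W)
      (Real.exp (2 * X s + 2 * W s) * (2 * deriv X s + 2 * deriv W s) * Real.sin s ^ 2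
        + Real.exp (2 * X s + 2 * W s) * (2 * Real.sin s * Real.cos s)) s := by
    intro s
    have ha : HasDerivAt (fun u => 2 * X u + 2 * W u) (2 * deriv X s + 2 * deriv W s) s :=
      ((hXd s).hasDerivAt.const_mul 2).add ((hWd s).hasDerivAt.const_mul 2)
    have hb := ha.exp
    have hc : HasDerivAt (fun u => Real.sin u ^ 2) (2 * Real.sin s * Real.cos s) s := by
      have := (Real.hasDerivAt_sin s).fun_pow 2
      simpa [mul_comm, mul_assoc, mul_left_comm] using this
    exact hb.fun_mul hc
  have hBd' : deriv (Bf X W) = fun s =>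
      Real.exp (2 * X s + 2 * W s) * (2 * deriv X s + 2 * deriv W s) * Real.sin s ^ 2
        + Real.exp (2 * X s + 2 * W s) * (2 * Real.sin s * Real.cos s) :=
    funext fun s => (hBd s).deriv
  -- the Γ^0_{11} function, simplified
  have hG : (fun s => -((1/2) * (Af X W s)⁻¹ * deriv (Bf X W) s)) = fun s =>
      -(Real.exp (4 * W s) * ((deriv X s + deriv W s) * Real.sin s ^ 2
        + Real.sin s * Real.cos s)) := by
    funext s
    rw [hBd']
    have he : Real.exp (2 * X s + 2 * W s) = Real.exp (2 * X s - 2 * W s) * Real.exp (4 * W s) := by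
      rw [← Real.exp_add]; congr 1; ring
    simp only [Af, he]
    field_simp
  -- T1 : pd 0 of Γ^0_{11}
  have T1 : pd 0 (Christoffel (gmat X W) 0 1 1) x =
      deriv (fun s => -(Real.exp (4 * W s) * ((deriv X s + deriv W s) * Real.sin s ^ 2
        + Real.sin s * Real.cos s))) (x 0) := by
    rw [← hG]
    apply Filter.EventuallyEq.deriv_eq
    filter_upwards [hev0] with t ht
    rw [show Christoffel (gmat X W) 0 1 1 (Function.update x 0 t) =
        Γf X W 0 1 1 (Function.update x 0 t) from
      christoffel_eq X W _ (by simpa using ht) (by simpa using h1) 0 1 1]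
    simp [Γf]
  -- T2 : pd 1 of Γ^1_{11} = 0
  have T2 : pd 1 (Christoffel (gmat X W) 1 1 1) x = 0 := by
    have : (fun t => Christoffel (gmat X W) 1 1 1 (Function.update x 1 t)) =ᶠ[nhds (x 1)]
        (fun _ => (0:ℝ)) := by
      filter_upwards [hev1] with t ht
      rw [show Christoffel (gmat X W) 1 1 1 (Function.update x 1 t) =
          Γf X W 1 1 1 (Function.update x 1 t) from
        christoffel_eq X W _ (by simpa using h0) (by simpa using ht) 1 1 1]
      simp [Γf]
    rw [pd, this.deriv_eq, deriv_const]
  -- T3 : pd 2 of Γ^2_{11} = 0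
  have T3 : pd 2 (Christoffel (gmat X W) 2 1 1) x = 0 := by
    have : (fun t => Christoffel (gmat X W) 2 1 1 (Function.update x 2 t)) = fun _ => (0:ℝ) := by
      funext t
      rw [show Christoffel (gmat X W) 2 1 1 (Function.update x 2 t) =
          Γf X W 2 1 1 (Function.update x 2 t) from
        christoffel_eq X W _ (by simpa using h0) (by simpa using h1) 2 1 1]
      simp [Γf]
    rw [pd, this, deriv_const]
  -- T4 : pd 1 of the trace
  have T4 : pd 1 (fun y => Christoffel (gmat X W) 0 0 1 y + Christoffel (gmat X W) 1 1 1 y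
      + Christoffel (gmat X W) 2 2 1 y) x =
      (-Real.sin (x 1) * Real.sin (x 1) - Real.cos (x 1) * Real.cos (x 1)) / Real.sin (x 1) ^ 2 := by
    have heq : (fun t => Christoffel (gmat X W) 0 0 1 (Function.update x 1 t)
        + Christoffel (gmat X W) 1 1 1 (Function.update x 1 t)
        + Christoffel (gmat X W) 2 2 1 (Function.update x 1 t)) =ᶠ[nhds (x 1)]
        (fun t => Real.cos t / Real.sin t) := by
      filter_upwards [hev1] with t ht
      rw [christoffel_eq X W _ (by simpa using h0) (by simpa using ht) 0 0 1,
        christoffel_eq X W _ (by simpa using h0) (by simpa using ht) 1 1 1,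
        christoffel_eq X W _ (by simpa using h0) (by simpa using ht) 2 2 1]
      simp [Γf]
    rw [pd, heq.deriv_eq, ((Real.hasDerivAt_cos (x 1)).fun_div (Real.hasDerivAt_sin (x 1)) h1).deriv]
  -- derivative of the Γ^0_{11} radial profile
  have hD : deriv (fun s => -(Real.exp (4 * W s) * ((deriv X s + deriv W s) * Real.sin s ^ 2
      + Real.sin s * Real.cos s))) (x 0) =
      -(Real.exp (4 * W (x 0)) * (4 * deriv W (x 0)) *
          ((deriv X (x 0) + deriv W (x 0)) * Real.sin (x 0) ^ 2 + Real.sin (x 0) * Real.cos (x 0))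
        + Real.exp (4 * W (x 0)) *
          ((deriv (deriv X) (x 0) + deriv (deriv W) (x 0)) * Real.sin (x 0) ^ 2
            + (deriv X (x 0) + deriv W (x 0)) * (2 * Real.sin (x 0) * Real.cos (x 0))
            + (Real.cos (x 0) * Real.cos (x 0) + Real.sin (x 0) * -Real.sin (x 0)))) := by
    have hQ4 : HasDerivAt (fun s => Real.exp (4 * W s))
        (Real.exp (4 * W (x 0)) * (4 * deriv W (x 0))) (x 0) :=
      ((hWd (x 0)).hasDerivAt.const_mul 4).exp
    have hsin2 : HasDerivAt (fun u => Real.sin u ^ 2)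
        (2 * Real.sin (x 0) * Real.cos (x 0)) (x 0) := by
      have := (Real.hasDerivAt_sin (x 0)).fun_pow 2
      simpa [mul_comm, mul_assoc, mul_left_comm] using this
    have hin : HasDerivAt
        (fun s => (deriv X s + deriv W s) * Real.sin s ^ 2 + Real.sin s * Real.cos s)
        ((deriv (deriv X) (x 0) + deriv (deriv W) (x 0)) * Real.sin (x 0) ^ 2
          + (deriv X (x 0) + deriv W (x 0)) * (2 * Real.sin (x 0) * Real.cos (x 0))
          + (Real.cos (x 0) * Real.cos (x 0) + Real.sin (x 0) * -Real.sin (x 0))) (x 0) := by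
      have h5 := (((hX2 (x 0)).hasDerivAt.add (hW2 (x 0)).hasDerivAt).mul hsin2).add
        ((Real.hasDerivAt_sin (x 0)).mul (Real.hasDerivAt_cos (x 0)))
      exact h5
    exact ((hQ4.mul hin).neg).deriv
  have hg11 : gmat X W x 1 1 = Bf X W (x 0) := by
    simp [gmat, Matrix.diagonal_apply, Bf]
  rw [RicciT]
  simp only [Fin.sum_univ_three]
  rw [T1, T2, T3, T4, hD, hg11]
  simp only [christoffel_eq X W x h0 h1]
  simp [Γf]
  have hAd : HasDerivAt (Af X W)
      (Real.exp (2 * X (x 0) - 2 * W (x 0)) * (2 * deriv X (x 0) - 2 * deriv W (x 0))) (x 0) := by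
    have ha : HasDerivAt (fun u => 2 * X u - 2 * W u)
        (2 * deriv X (x 0) - 2 * deriv W (x 0)) (x 0) :=
      ((hXd (x 0)).hasDerivAt.const_mul 2).sub ((hWd (x 0)).hasDerivAt.const_mul 2)
    exact ha.exp
  rw [show deriv (Af X W) (x 0) =
    Real.exp (2 * X (x 0) - 2 * W (x 0)) * (2 * deriv X (x 0) - 2 * deriv W (x 0)) from hAd.deriv]
  simp only [hBd']
  simp only [Af, Bf]
  have E1 : Real.exp (2 * X (x 0) + 2 * W (x 0))
      = Real.exp (2 * X (x 0)) * Real.exp (2 * W (x 0)) := Real.exp_add _ _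
  have E2 : Real.exp (2 * X (x 0) - 2 * W (x 0))
      = Real.exp (2 * X (x 0)) / Real.exp (2 * W (x 0)) := Real.exp_sub _ _
  have E3 : Real.exp (4 * W (x 0)) = Real.exp (2 * W (x 0)) * Real.exp (2 * W (x 0)) := by
    rw [← Real.exp_add]; congr 1; ring
  have E4 : Real.exp (-(4 * W (x 0)))
      = (Real.exp (2 * W (x 0)) * Real.exp (2 * W (x 0)))⁻¹ := by
    rw [← Real.exp_add, ← Real.exp_neg]; congr 1; ring
  have E5 : Real.exp (2 * (W (x 0) - X (x 0)))
      = Real.exp (2 * W (x 0)) / Real.exp (2 * X (x 0)) := by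
    rw [← Real.exp_sub]; congr 1; ring
  simp only [E1, E2, E3, E4, E5]
  have hEX : Real.exp (2 * X (x 0)) ≠ 0 := Real.exp_ne_zero _
  have hEW : Real.exp (2 * W (x 0)) ≠ 0 := Real.exp_ne_zero _
  have p0 : Real.cos (x 0) * Real.cos (x 0) = 1 - Real.sin (x 0) * Real.sin (x 0) := by
    have := Real.sin_sq_add_cos_sq (x 0); nlinarith [this]
  have p1 : Real.cos (x 1) * Real.cos (x 1) = 1 - Real.sin (x 1) * Real.sin (x 1) := by
    have := Real.sin_sq_add_cos_sq (x 1); nlinarith [this]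
  field_simp
  ring_nf
  rw [Real.cos_sq']
  ring
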